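/- Let (X_k)_{k≥0} be a strongly critical p-type GWI process with X₀ = 0, finite second moments, and lower triangular offspring mean matrix A with unit diagonal. Then for each i, E(X_{k,i}) = O(k^{η_i}) as k → ∞, where η_i := max{ m ∈ {1,…,p} : ∃ j with ((A−I_p)^{m−1})_{i,j} > 0 }. -/

import Mathlib

/-!
Conditioning on generation `k`, Wald's identity turns the branching recursion into
`E X_{k+1} = A E X_k + b` with `b = E ε_1`, hence `E X_k = ∑_{j<k} A^j b`. The recursion is
derived for lower Lebesgue integrals, where it needs no integrability, and moved to `ℝ` once
the first moments are known to be finite.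

Write `A = 1 + N`. Unit diagonal and lower triangularity make `N` entrywise nonnegative and
strictly lower triangular, so `N^p = 0`, and the hockey-stick identity gives
`∑_{j<k} (1 + N)^j = ∑_{m<p} C(k, m+1) N^m`. By nonnegativity, `(N^m b)_i = 0` as soon as
`m ≥ η_i`, while `C(k, m+1) ≤ k^(m+1) ≤ k^η_i` for `m < η_i`.
-/

open MeasureTheory ProbabilityTheory

/-- The `p`-type Galton–Watson process with immigration started from `0`:
`X_k = ∑_{i=1}^p ∑_{j=1}^{X_{k-1,i}} ξ_{k,j,i} + ε_k`. -/
def gwiX {Ω : Type*} (p : ℕ) (ξ : ℕ → ℕ → Fin p → Ω → (Fin p → ℕ))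
    (ε : ℕ → Ω → (Fin p → ℕ)) : ℕ → Ω → (Fin p → ℕ)
  | 0 => fun _ _ => 0
  | k + 1 => fun ω t =>
      (∑ i : Fin p, ∑ j ∈ Finset.range (gwiX p ξ ε k ω i), ξ (k + 1) (j + 1) i ω t)
        + ε (k + 1) ω t

open Finset

open scoped ENNReal Matrix

section Binomial

variable {R : Type*} [Semiring R]

theorem sum_range_add_one_pow (x : R) (k : ℕ) :
    ∑ j ∈ range k, (x + 1) ^ j = ∑ m ∈ range k, k.choose (m + 1) • x ^ m := by
  induction k with
  | zero => simp
  | succ k ih =>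
    rw [sum_range_succ, ih, (Commute.one_right x).add_pow]
    simp only [Nat.choose_succ_succ', add_smul, sum_add_distrib, one_pow, mul_one]
    rw [sum_range_succ (fun m => k.choose (m + 1) • x ^ m), Nat.choose_succ_self, zero_smul,
      add_zero, add_comm]
    exact congrArg (· + _) (sum_congr rfl fun m _ => by rw [nsmul_eq_mul, Nat.cast_comm])

theorem sum_range_eq_sum_range_of_eq_zero {M : Type*} [AddCommMonoid M] {f : ℕ → M} {a b : ℕ}
    (ha : ∀ m, a ≤ m → f m = 0) (hb : ∀ m, b ≤ m → f m = 0) :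
    ∑ m ∈ range a, f m = ∑ m ∈ range b, f m := by
  rcases le_total a b with h | h
  · exact sum_subset (range_subset_range.2 h) fun m _ hm => ha m (by simpa using hm)
  · exact (sum_subset (range_subset_range.2 h) fun m _ hm => hb m (by simpa using hm)).symm

theorem sum_range_add_one_pow_of_pow_eq_zero {x : R} {n : ℕ} (hx : x ^ n = 0) (k : ℕ) :
    ∑ j ∈ range k, (x + 1) ^ j = ∑ m ∈ range n, k.choose (m + 1) • x ^ m := by
  rw [sum_range_add_one_pow]
  refine sum_range_eq_sum_range_of_eq_zero (fun m hm => ?_) fun m hm => ?_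
  · rw [Nat.choose_eq_zero_of_lt (by omega), zero_smul]
  · rw [pow_eq_zero_of_le hm hx, smul_zero]

end Binomial

theorem sum_choose_mul_le_pow {p η k : ℕ} {c : ℕ → ℝ} (hc : ∀ m, 0 ≤ c m)
    (hcη : ∀ m < p, η ≤ m → c m = 0) (hk : 1 ≤ k) :
    ∑ m ∈ range p, (k.choose (m + 1) : ℝ) * c m ≤ (∑ m ∈ range p, c m) * k ^ η := by
  rw [sum_mul]
  refine sum_le_sum fun m hm => ?_
  rcases lt_or_ge m η with hmη | hmη
  · rw [mul_comm]
    refine mul_le_mul_of_nonneg_left ?_ (hc m)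
    calc (k.choose (m + 1) : ℝ) ≤ (k : ℝ) ^ (m + 1) := by exact_mod_cast Nat.choose_le_pow k _
      _ ≤ (k : ℝ) ^ η := pow_le_pow_right₀ (by exact_mod_cast hk) hmη
  · simp [hcη m (mem_range.1 hm) hmη]

namespace Matrix

section Nonneg

variable {n : Type*}

theorem sub_one_apply_nonneg [DecidableEq n] {A : Matrix n n ℝ} (hA : ∀ t i, 0 ≤ A t i)
    (hdiag : ∀ i, A i i = 1) (t i : n) : 0 ≤ (A - 1) t i := by
  rcases eq_or_ne t i with rfl | hti
  · simp [hdiag]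
  · simpa [one_apply_ne hti] using hA t i

variable [Fintype n]

theorem mulVec_apply_nonneg {M : Matrix n n ℝ} {v : n → ℝ} (hM : ∀ t i, 0 ≤ M t i)
    (hv : ∀ i, 0 ≤ v i) (t : n) : 0 ≤ (M *ᵥ v) t :=
  sum_nonneg fun i _ => mul_nonneg (hM t i) (hv i)

variable [DecidableEq n]

theorem geom_sum_mulVec_nonneg {A : Matrix n n ℝ} {b : n → ℝ} (hA : ∀ t i, 0 ≤ A t i)
    (hb : ∀ t, 0 ≤ b t) (k : ℕ) (t : n) : 0 ≤ ((∑ j ∈ range k, A ^ j) *ᵥ b) t :=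
  mulVec_apply_nonneg (fun t r => by
    simpa only [sum_apply] using sum_nonneg fun j _ => pow_apply_nonneg hA j t r) hb t

theorem ofReal_geom_sum_mulVec_of_recurrence {A : Matrix n n ℝ} {b : n → ℝ}
    (hA : ∀ t i, 0 ≤ A t i) (hb : ∀ t, 0 ≤ b t) {u : ℕ → n → ℝ≥0∞} (h0 : ∀ t, u 0 t = 0)
    (hsucc : ∀ k t, u (k + 1) t = ∑ i, ENNReal.ofReal (A t i) * u k i + ENNReal.ofReal (b t))
    (k : ℕ) (t : n) : u k t = ENNReal.ofReal (((∑ j ∈ range k, A ^ j) *ᵥ b) t) := by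
  have hv := geom_sum_mulVec_nonneg hA hb
  have hAv : ∀ k t, 0 ≤ (A *ᵥ ((∑ j ∈ range k, A ^ j) *ᵥ b)) t := fun k =>
    mulVec_apply_nonneg hA (hv k)
  induction k generalizing t with
  | zero => simp [h0]
  | succ k ih =>
    rw [hsucc, geom_sum_succ, add_mulVec, one_mulVec, ← mulVec_mulVec, Pi.add_apply,
      ENNReal.ofReal_add (hAv k t) (hb t)]
    congr 1
    rw [mulVec, dotProduct, ENNReal.ofReal_sum_of_nonneg fun i _ => mul_nonneg (hA t i) (hv k i)]
    exact sum_congr rfl fun i _ => by rw [ih, ENNReal.ofReal_mul (hA t i)]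

end Nonneg

theorem geom_sum_mulVec_apply_eq_sum_choose {n α : Type*} [Fintype n] [DecidableEq n] [Ring α]
    {A : Matrix n n α} {q : ℕ} (hA : (A - 1) ^ q = 0) (b : n → α) (k : ℕ) (i : n) :
    ((∑ j ∈ range k, A ^ j) *ᵥ b) i =
      ∑ m ∈ range q, (k.choose (m + 1) : α) * ((A - 1) ^ m *ᵥ b) i := by
  have h := sum_range_add_one_pow_of_pow_eq_zero hA k
  rw [sub_add_cancel] at h
  rw [h, sum_mulVec, Finset.sum_apply]
  simp only [← Nat.cast_smul_eq_nsmul α, smul_mulVec, Pi.smul_apply, smul_eq_mul]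

section StrictLower

variable {p : ℕ} {R : Type*} [Semiring R] {N : Matrix (Fin p) (Fin p) R}

theorem pow_apply_eq_zero_of_lt_add (hN : ∀ t j, t ≤ j → N t j = 0) (m : ℕ) {t j : Fin p}
    (h : (t : ℕ) < j + m) : (N ^ m) t j = 0 := by
  induction m generalizing t j with
  | zero => exact one_apply_ne fun htj => by subst htj; omega
  | succ m ih =>
    rw [pow_succ, mul_apply]
    refine sum_eq_zero fun r _ => ?_
    rcases lt_or_ge (t : ℕ) (r + m) with htr | hrt
    · rw [ih htr, zero_mul]
    · rw [hN r j (Fin.le_def.2 (by omega)), mul_zero]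

theorem pow_card_eq_zero_of_strictLower (hN : ∀ t j, t ≤ j → N t j = 0) : N ^ p = 0 :=
  ext fun t j => pow_apply_eq_zero_of_lt_add hN p (by omega)

end StrictLower

theorem sub_one_apply_eq_zero_of_le {n : Type*} [DecidableEq n] [LinearOrder n] {A : Matrix n n ℝ}
    (hlow : ∀ t i, t < i → A t i = 0) (hdiag : ∀ i, A i i = 1) {t i : n} (hti : t ≤ i) :
    (A - 1) t i = 0 := by
  rcases hti.lt_or_eq with hti | rfl
  · simp [hlow t i hti, one_apply_ne hti.ne]
  · simp [hdiag]

theorem pow_apply_eq_zero_of_sSup_le {p : ℕ} {M : Matrix (Fin p) (Fin p) ℝ}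
    (hM : ∀ t j, 0 ≤ M t j) {i r : Fin p} {m : ℕ} (hm : m < p)
    (h : sSup {m : ℕ | m ∈ Finset.Icc 1 p ∧ ∃ j, 0 < (M ^ (m - 1)) i j} ≤ m) :
    (M ^ m) i r = 0 := by
  refine le_antisymm (not_lt.1 fun hpos => ?_) (pow_apply_nonneg hM m i r)
  have := le_csSup (a := m + 1) (s := {m : ℕ | m ∈ Finset.Icc 1 p ∧ ∃ j, 0 < (M ^ (m - 1)) i j})
    ⟨p, fun x hx => (mem_Icc.1 hx.1).2⟩ ⟨mem_Icc.2 ⟨by omega, by omega⟩, r, by simpa using hpos⟩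
  omega

end Matrix

section RandomSum

variable {Ω : Type*}

theorem measurable_sum_range_random {β : Type*} [AddCommMonoid β] [MeasurableSpace β]
    [MeasurableAdd₂ β] {m : MeasurableSpace Ω} {N : Ω → ℕ} {Y : ℕ → Ω → β}
    (hN : Measurable N) (hY : ∀ j, Measurable (Y j)) :
    Measurable fun ω => ∑ j ∈ range (N ω), Y j ω := by
  have : Measurable fun q : Ω × ℕ => ∑ j ∈ range q.2, Y j q.1 :=
    measurable_from_prod_countable_left fun n => Finset.measurable_sum (range n) fun j _ => hY j
  exact this.comp (measurable_id.prodMk hN)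

theorem sum_range_eq_tsum_ite_mul (n : ℕ) (y : ℕ → ℝ≥0∞) :
    ∑ j ∈ range n, y j = ∑' j, (if j < n then 1 else 0) * y j := by
  rw [tsum_eq_sum (s := range n) fun j hj => by simp_all]
  exact sum_congr rfl fun j hj => by simp_all

theorem lintegral_sum_range_random [MeasurableSpace Ω] {μ : Measure Ω} {N : Ω → ℕ}
    {Y : ℕ → Ω → ℝ≥0∞} (hN : Measurable N) (hY : ∀ j, Measurable (Y j))
    (hindep : ∀ j, IndepFun N (Y j) μ) {a : ℝ≥0∞} (ha : ∀ j, ∫⁻ ω, Y j ω ∂μ = a) :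
    ∫⁻ ω, ∑ j ∈ range (N ω), Y j ω ∂μ = a * ∫⁻ ω, (N ω : ℝ≥0∞) ∂μ := by
  have hI : ∀ j, Measurable fun ω => if j < N ω then (1 : ℝ≥0∞) else 0 :=
    fun j => (measurable_of_countable fun n => if j < n then (1 : ℝ≥0∞) else 0).comp hN
  calc ∫⁻ ω, ∑ j ∈ range (N ω), Y j ω ∂μ
      = ∫⁻ ω, ∑' j, (if j < N ω then 1 else 0) * Y j ω ∂μ := by
        simp_rw [sum_range_eq_tsum_ite_mul]
    _ = ∑' j, (∫⁻ ω, if j < N ω then 1 else 0 ∂μ) * ∫⁻ ω, Y j ω ∂μ := by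
        rw [lintegral_tsum fun j => by exact ((hI j).mul (hY j)).aemeasurable]
        refine tsum_congr fun j => lintegral_mul_eq_lintegral_mul_lintegral_of_indepFun''
          (hI j).aemeasurable (hY j).aemeasurable ?_
        exact (hindep j).comp (measurable_of_countable fun n => if j < n then (1 : ℝ≥0∞) else 0)
          measurable_id
    _ = a * ∫⁻ ω, (N ω : ℝ≥0∞) ∂μ := by
        simp_rw [ha, ENNReal.tsum_mul_right, ← lintegral_tsum fun j => (hI j).aemeasurable]
        rw [mul_comm]
        congr 1
        refine lintegral_congr fun ω => ?_
        simpa using (sum_range_eq_tsum_ite_mul (N ω) 1).symm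

end RandomSum

theorem integrable_natCast_of_integrable_sq {Ω : Type*} [MeasurableSpace Ω] {μ : Measure Ω} {f : Ω → ℕ}
    (hf : Measurable f) (h : Integrable (fun ω => (f ω : ℝ) ^ 2) μ) :
    Integrable (fun ω => (f ω : ℝ)) μ :=
  h.mono (measurable_of_countable (fun n : ℕ => (n : ℝ)) |>.comp hf).aestronglyMeasurable
    (ae_of_all _ fun ω => by
      simpa using (by exact_mod_cast Nat.le_self_pow two_ne_zero (f ω) : (f ω : ℝ) ≤ (f ω : ℝ) ^ 2))

theorem ProbabilityTheory.iIndepFun.indepFun_of_measurable_biSup {Ω ι β γ : Type*}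
    [MeasurableSpace Ω] {μ : Measure Ω} [mβ : MeasurableSpace β] [MeasurableSpace γ]
    {F : ι → Ω → β} (hF : ∀ i, Measurable (F i)) (hindep : iIndepFun F μ) {S : Set ι} {x : ι}
    (hx : x ∉ S) {g : Ω → γ} (hg : Measurable[⨆ i ∈ S, mβ.comap (F i)] g) :
    IndepFun g (F x) μ := by
  have h := indep_iSup_of_disjoint (fun i => (hF i).comap_le)
    ((iIndepFun_iff_iIndep _ _ _).mp hindep) (Set.disjoint_singleton_right.mpr hx)
  rw [IndepFun_iff_Indep]
  refine indep_of_indep_of_le_right (indep_of_indep_of_le_left h hg.comap_le) ?_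
  exact le_iSup₂ (f := fun i (_ : i ∈ ({x} : Set ι)) => mβ.comap (F i)) x rfl

section GaltonWatson

variable {Ω : Type*} {p : ℕ} (ξ : ℕ → ℕ → Fin p → Ω → (Fin p → ℕ)) (ε : ℕ → Ω → (Fin p → ℕ))

def gwiNoise : (ℕ × ℕ × Fin p) ⊕ ℕ → Ω → (Fin p → ℕ) :=
  Sum.elim (fun q => ξ q.1 q.2.1 q.2.2) ε

def gwiGeneration : (ℕ × ℕ × Fin p) ⊕ ℕ → ℕ :=
  Sum.elim Prod.fst id

abbrev gwiPast (k : ℕ) : MeasurableSpace Ω :=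
  ⨆ x ∈ gwiGeneration ⁻¹' Set.Iic k, MeasurableSpace.comap (gwiNoise ξ ε x) inferInstance

theorem measurable_gwiNoise_past {k : ℕ} {x : (ℕ × ℕ × Fin p) ⊕ ℕ}
    (hx : gwiGeneration x ≤ k) : Measurable[gwiPast ξ ε k] (gwiNoise ξ ε x) :=
  Measurable.of_comap_le <| le_iSup₂
    (f := fun x (_ : x ∈ gwiGeneration ⁻¹' Set.Iic k) =>
      MeasurableSpace.comap (gwiNoise ξ ε x) inferInstance) x hx

theorem measurable_gwiX_past (k : ℕ) (t : Fin p) :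
    Measurable[gwiPast ξ ε k] fun ω => gwiX p ξ ε k ω t := by
  induction k generalizing t with
  | zero => exact measurable_const
  | succ k ih =>
    have hmono : gwiPast ξ ε k ≤ gwiPast ξ ε (k + 1) :=
      biSup_mono fun x (hx : gwiGeneration x ≤ k) => hx.trans k.le_succ
    refine Measurable.add (Finset.measurable_sum _ fun i _ =>
      measurable_sum_range_random ((ih i).mono hmono le_rfl) fun j => ?_) ?_
    · exact (measurable_pi_apply t).comp
        (measurable_gwiNoise_past ξ ε (x := .inl (k + 1, j + 1, i)) le_rfl)
    · exact (measurable_pi_apply t).comp (measurable_gwiNoise_past ξ ε (x := .inr (k + 1)) le_rfl)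

variable [MeasurableSpace Ω] {μ : Measure Ω}

theorem measurable_gwiNoise (hξ : ∀ k j i, Measurable (ξ k j i)) (hε : ∀ k, Measurable (ε k)) :
    ∀ x, Measurable (gwiNoise ξ ε x)
  | .inl _ => hξ _ _ _
  | .inr _ => hε _

theorem measurable_gwiX (hξ : ∀ k j i, Measurable (ξ k j i)) (hε : ∀ k, Measurable (ε k))
    (k : ℕ) (t : Fin p) : Measurable fun ω => gwiX p ξ ε k ω t :=
  (measurable_gwiX_past ξ ε k t).mono
    (iSup₂_le fun x _ => (measurable_gwiNoise ξ ε hξ hε x).comap_le) le_rfl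

theorem indepFun_gwiX_offspring (hξ : ∀ k j i, Measurable (ξ k j i))
    (hε : ∀ k, Measurable (ε k)) (hindep : iIndepFun (gwiNoise ξ ε) μ)
    (k j : ℕ) (i i' t : Fin p) :
    IndepFun (fun ω => gwiX p ξ ε k ω i) (fun ω => ξ (k + 1) j i' ω t) μ :=
  (hindep.indepFun_of_measurable_biSup (measurable_gwiNoise ξ ε hξ hε)
    (x := .inl (k + 1, j, i')) (by simp [gwiGeneration]) (measurable_gwiX_past ξ ε k i)).comp
    measurable_id (measurable_pi_apply t)

theorem lintegral_gwiX_succ (hξ : ∀ k j i, Measurable (ξ k j i)) (hε : ∀ k, Measurable (ε k))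
    (hindep : iIndepFun (gwiNoise ξ ε) μ) (hξid : ∀ k j i, IdentDistrib (ξ k j i) (ξ 1 1 i) μ μ)
    (hεid : ∀ k, IdentDistrib (ε k) (ε 1) μ μ) (k : ℕ) (t : Fin p) :
    ∫⁻ ω, (gwiX p ξ ε (k + 1) ω t : ℝ≥0∞) ∂μ =
      ∑ i, (∫⁻ ω, (ξ 1 1 i ω t : ℝ≥0∞) ∂μ) * (∫⁻ ω, (gwiX p ξ ε k ω i : ℝ≥0∞) ∂μ) +
        ∫⁻ ω, (ε 1 ω t : ℝ≥0∞) ∂μ := by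
  have hcast : Measurable fun n : ℕ => (n : ℝ≥0∞) := measurable_of_countable _
  have hξt : ∀ k j i, Measurable fun ω => (ξ k j i ω t : ℝ≥0∞) :=
    fun k j i => hcast.comp ((measurable_pi_apply t).comp (hξ k j i))
  have hεt : ∀ k, Measurable fun ω => (ε k ω t : ℝ≥0∞) :=
    fun k => hcast.comp ((measurable_pi_apply t).comp (hε k))
  have hid : ∀ {X Y : Ω → Fin p → ℕ}, IdentDistrib X Y μ μ →
      ∫⁻ ω, (X ω t : ℝ≥0∞) ∂μ = ∫⁻ ω, (Y ω t : ℝ≥0∞) ∂μ :=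
    fun h => (h.comp (hcast.comp (measurable_pi_apply t))).lintegral_eq
  simp only [gwiX, Nat.cast_add, Nat.cast_sum]
  rw [lintegral_add_right _ (hεt _),
    lintegral_finsetSum _ fun i _ =>
      measurable_sum_range_random (measurable_gwiX ξ ε hξ hε k i) fun j => hξt _ _ _,
    hid (hεid (k + 1))]
  congr 1
  refine sum_congr rfl fun i _ => lintegral_sum_range_random (measurable_gwiX ξ ε hξ hε k i)
    (fun j => hξt _ _ _) (fun j => ?_) fun j => ?_
  · exact (indepFun_gwiX_offspring ξ ε hξ hε hindep k (j + 1) i i t).comp measurable_id hcast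
  · exact hid (hξid _ _ _)

noncomputable def gwiOffspringMean (μ : Measure Ω) : Matrix (Fin p) (Fin p) ℝ :=
  Matrix.of fun t i => ∫ ω, (ξ 1 1 i ω t : ℝ) ∂μ

noncomputable def gwiImmigrationMean (μ : Measure Ω) : Fin p → ℝ :=
  fun t => ∫ ω, (ε 1 ω t : ℝ) ∂μ

theorem gwiOffspringMean_nonneg (t i : Fin p) : 0 ≤ gwiOffspringMean ξ μ t i :=
  integral_nonneg fun _ => Nat.cast_nonneg _

theorem gwiImmigrationMean_nonneg (t : Fin p) : 0 ≤ gwiImmigrationMean ε μ t :=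
  integral_nonneg fun _ => Nat.cast_nonneg _

theorem integral_gwiX (hξ : ∀ k j i, Measurable (ξ k j i)) (hε : ∀ k, Measurable (ε k))
    (hindep : iIndepFun (gwiNoise ξ ε) μ) (hξid : ∀ k j i, IdentDistrib (ξ k j i) (ξ 1 1 i) μ μ)
    (hεid : ∀ k, IdentDistrib (ε k) (ε 1) μ μ)
    (hξint : ∀ i t, Integrable (fun ω => (ξ 1 1 i ω t : ℝ)) μ)
    (hεint : ∀ t, Integrable (fun ω => (ε 1 ω t : ℝ)) μ) (k : ℕ) (t : Fin p) :
    ∫ ω, (gwiX p ξ ε k ω t : ℝ) ∂μ =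
      ((∑ j ∈ range k, gwiOffspringMean ξ μ ^ j) *ᵥ gwiImmigrationMean ε μ) t := by
  have hofReal : ∀ {f : Ω → ℕ}, Integrable (fun ω => (f ω : ℝ)) μ →
      ENNReal.ofReal (∫ ω, (f ω : ℝ) ∂μ) = ∫⁻ ω, (f ω : ℝ≥0∞) ∂μ := fun hf => by
    simpa using ofReal_integral_eq_lintegral_ofReal hf (ae_of_all _ fun ω => Nat.cast_nonneg _)
  have hA := gwiOffspringMean_nonneg ξ (μ := μ)
  have hb := gwiImmigrationMean_nonneg ε (μ := μ)
  have hmean := Matrix.ofReal_geom_sum_mulVec_of_recurrence hA hb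
    (u := fun k t => ∫⁻ ω, (gwiX p ξ ε k ω t : ℝ≥0∞) ∂μ) (fun t => by simp [gwiX])
    (fun k t => by
      simp only [lintegral_gwiX_succ ξ ε hξ hε hindep hξid hεid, gwiOffspringMean,
        gwiImmigrationMean, Matrix.of_apply, hofReal (hξint _ _), hofReal (hεint _)]) k t
  calc ∫ ω, (gwiX p ξ ε k ω t : ℝ) ∂μ = (∫⁻ ω, (gwiX p ξ ε k ω t : ℝ≥0∞) ∂μ).toReal := by
        simpa using integral_toReal (measurable_of_countable (fun n : ℕ => (n : ℝ≥0∞))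
          |>.comp (measurable_gwiX ξ ε hξ hε k t)).aemeasurable
          (ae_of_all _ fun ω => ENNReal.natCast_lt_top _)
    _ = _ := by rw [hmean, ENNReal.toReal_ofReal (Matrix.geom_sum_mulVec_nonneg hA hb k t)]

end GaltonWatson

theorem gwi_mean_growth_general {Ω : Type*} [MeasurableSpace Ω]
    (μ : Measure Ω)
    (p : ℕ) (ξ : ℕ → ℕ → Fin p → Ω → (Fin p → ℕ)) (ε : ℕ → Ω → (Fin p → ℕ))
    (hξmeas : ∀ k j i, Measurable (ξ k j i)) (hεmeas : ∀ k, Measurable (ε k))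
    (hindep : iIndepFun
      (Sum.elim (fun q : ℕ × ℕ × Fin p => ξ q.1 q.2.1 q.2.2) ε) μ)
    (hξid : ∀ k j i, IdentDistrib (ξ k j i) (ξ 1 1 i) μ μ)
    (hεid : ∀ k, IdentDistrib (ε k) (ε 1) μ μ)
    (hξ2 : ∀ i t, Integrable (fun ω => ((ξ 1 1 i ω t : ℕ) : ℝ) ^ 2) μ)
    (hε2 : ∀ t, Integrable (fun ω => ((ε 1 ω t : ℕ) : ℝ) ^ 2) μ)
    (A : Matrix (Fin p) (Fin p) ℝ)
    (hA : ∀ t i, A t i = ∫ ω, ((ξ 1 1 i ω t : ℕ) : ℝ) ∂μ)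
    (hlow : ∀ t i : Fin p, t < i → A t i = 0)
    (hdiag : ∀ i : Fin p, A i i = 1)
    (η : Fin p → ℕ)
    (hη : ∀ i : Fin p,
      η i = sSup {m : ℕ | m ∈ Finset.Icc 1 p ∧ ∃ j : Fin p, 0 < ((A - 1) ^ (m - 1)) i j}) :
    ∀ i : Fin p, ∃ C : ℝ, 0 < C ∧ ∀ k : ℕ, 1 ≤ k →
      |∫ ω, ((gwiX p ξ ε k ω i : ℕ) : ℝ) ∂μ| ≤ C * (k : ℝ) ^ (η i) := by
  intro i
  have hAmean : A = gwiOffspringMean ξ μ := Matrix.ext hA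
  have hN := Matrix.sub_one_apply_nonneg (hAmean ▸ gwiOffspringMean_nonneg ξ) hdiag
  set c : ℕ → ℝ := fun m => ((A - 1) ^ m *ᵥ gwiImmigrationMean ε μ) i
  have hc : ∀ m, 0 ≤ c m := fun m => Matrix.mulVec_apply_nonneg
    (Matrix.pow_apply_nonneg hN m) (gwiImmigrationMean_nonneg ε) i
  have hcη : ∀ m < p, η i ≤ m → c m = 0 := fun m hm hηm => by
    simp [c, Matrix.mulVec, dotProduct,
      Matrix.pow_apply_eq_zero_of_sSup_le hN hm (by rwa [← hη i])]
  have hmean : ∀ k, ∫ ω, (gwiX p ξ ε k ω i : ℝ) ∂μ =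
      ∑ m ∈ range p, (k.choose (m + 1) : ℝ) * c m := fun k => by
    rw [integral_gwiX ξ ε hξmeas hεmeas hindep hξid hεid
      (fun i t => integrable_natCast_of_integrable_sq ((measurable_pi_apply t).comp
        (hξmeas 1 1 i)) (hξ2 i t))
      (fun t => integrable_natCast_of_integrable_sq ((measurable_pi_apply t).comp
        (hεmeas 1)) (hε2 t)), ← hAmean,
      Matrix.geom_sum_mulVec_apply_eq_sum_choose (Matrix.pow_card_eq_zero_of_strictLower
        fun t j => Matrix.sub_one_apply_eq_zero_of_le hlow hdiag)]
  refine ⟨∑ m ∈ range p, c m + 1, add_pos_of_nonneg_of_pos (sum_nonneg fun m _ => hc m) one_pos,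
    fun k hk => ?_⟩
  rw [hmean, abs_of_nonneg (sum_nonneg fun m _ => mul_nonneg (Nat.cast_nonneg _) (hc m))]
  calc _ ≤ (∑ m ∈ range p, c m) * (k : ℝ) ^ η i := sum_choose_mul_le_pow hc hcη hk
    _ ≤ _ := by gcongr; linarith

/-- For a strongly critical `p`-type GWI process with `X₀ = 0`, finite second
moments, and lower triangular offspring mean matrix `A` with unit diagonal,
`E(X_{k,i}) = O(k^{η_i})` as `k → ∞`, where
`η_i = max{ m ∈ {1,…,p} : ∃ j, ((A - I)^(m-1))_{i,j} > 0 }`. -/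
theorem gwi_mean_growth {Ω : Type*} [MeasurableSpace Ω]
    (μ : Measure Ω) [IsProbabilityMeasure μ]
    (p : ℕ) (ξ : ℕ → ℕ → Fin p → Ω → (Fin p → ℕ)) (ε : ℕ → Ω → (Fin p → ℕ))
    (hξmeas : ∀ k j i, Measurable (ξ k j i)) (hεmeas : ∀ k, Measurable (ε k))
    (hindep : iIndepFun
      (Sum.elim (fun q : ℕ × ℕ × Fin p => ξ q.1 q.2.1 q.2.2) ε) μ)
    (hξid : ∀ k j i, IdentDistrib (ξ k j i) (ξ 1 1 i) μ μ)
    (hεid : ∀ k, IdentDistrib (ε k) (ε 1) μ μ)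
    (hξ2 : ∀ i t, Integrable (fun ω => ((ξ 1 1 i ω t : ℕ) : ℝ) ^ 2) μ)
    (hε2 : ∀ t, Integrable (fun ω => ((ε 1 ω t : ℕ) : ℝ) ^ 2) μ)
    (A : Matrix (Fin p) (Fin p) ℝ)
    (hA : ∀ t i, A t i = ∫ ω, ((ξ 1 1 i ω t : ℕ) : ℝ) ∂μ)
    (hlow : ∀ t i : Fin p, t < i → A t i = 0)
    (hdiag : ∀ i : Fin p, A i i = 1)
    (η : Fin p → ℕ)
    (hη : ∀ i : Fin p,
      η i = sSup {m : ℕ | m ∈ Finset.Icc 1 p ∧ ∃ j : Fin p, 0 < ((A - 1) ^ (m - 1)) i j}) :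
    ∀ i : Fin p, ∃ C : ℝ, 0 < C ∧ ∀ k : ℕ, 1 ≤ k →
      |∫ ω, ((gwiX p ξ ε k ω i : ℕ) : ℝ) ∂μ| ≤ C * (k : ℝ) ^ (η i) :=
  gwi_mean_growth_general μ p ξ ε hξmeas hεmeas hindep hξid hεid hξ2 hε2 A hA hlow hdiag η hη
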